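/- Let ε ≥ 0 and suppose there exists a context-free function r0: S×A → ℝ such that |r(s,a,x) − r0(s,a)| ≤ ε for all s ∈ S, a ∈ A, x ∈ X. Let π* be any policy and let π0 ∈ Π₀(π*). Then v_{ρo}(π0) ≥ v_{ρe}(π*) − 2ε, where v_ρ(π) = Σ_{x,s,a} ρ(x) d^π(s,a|x) r(s,a,x); i.e., any policy in the ambiguity set of π* is 2ε-approximately as good as π*. -/
import Mathlib


open scoped BigOperators

/-- `p` is a probability mass function on a finite type. -/
def IsProb {Z : Type*} [Fintype Z] (p : Z → ℝ) : Prop :=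
  (∀ z, 0 ≤ p z) ∧ ∑ z, p z = 1

section CMDP

variable {S X A : Type*} [Fintype S] [Fintype X] [Fintype A]

/-- A Markovian stationary policy: a distribution over actions for each state–context pair. -/
def IsPolicy (π : S → X → A → ℝ) : Prop :=
  ∀ s x, IsProb (π s x)

/-- The deterministic policy induced by an action map `f`. -/
def detPolicy [DecidableEq A] (f : S → X → A) : S → X → A → ℝ :=
  fun s x a => if a = f s x then 1 else 0

/-- A policy is deterministic if it is induced by an action map. -/
def IsDet [DecidableEq A] (π : S → X → A → ℝ) : Prop :=
  ∃ f : S → X → A, π = detPolicy f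

/-- The `t`-step state distribution of the Markov chain induced by policy `π` in context `x`,
starting from `s₀ ∼ ν(·|x)`. -/
noncomputable def stateDist (P : S → A → X → S → ℝ) (ν : X → S → ℝ)
    (π : S → X → A → ℝ) (x : X) : ℕ → S → ℝ
  | 0 => fun s => ν x s
  | (t+1) => fun s' => ∑ s, ∑ a, stateDist P ν π x t s * π s x a * P s a x s'

/-- The per-context (discounted) stationary distribution
`d^π(s,a|x) = (1−γ) Σ_t γ^t P^π(s_t = s, a_t = a | x)`. -/
noncomputable def dCtx (γ : ℝ) (P : S → A → X → S → ℝ) (ν : X → S → ℝ)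
    (π : S → X → A → ℝ) (x : X) (s : S) (a : A) : ℝ :=
  (1 - γ) * ∑' t : ℕ, γ ^ t * (stateDist P ν π x t s * π s x a)

/-- Marginalized stationary distribution `d_ρ^π(s,a) = E_{x∼ρ}[d^π(s,a|x)]`. -/
noncomputable def dMarg (γ : ℝ) (P : S → A → X → S → ℝ) (ν : X → S → ℝ)
    (ρ : X → ℝ) (π : S → X → A → ℝ) (s : S) (a : A) : ℝ :=
  ∑ x, ρ x * dCtx γ P ν π x s a

/-- The `ρ`-marginalized value `v_ρ(π) = Σ_{x,s,a} ρ(x) d^π(s,a|x) r(s,a,x)`. -/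
noncomputable def val (γ : ℝ) (P : S → A → X → S → ℝ) (ν : X → S → ℝ)
    (ρ : X → ℝ) (r : S → A → X → ℝ) (π : S → X → A → ℝ) : ℝ :=
  ∑ x, ∑ s, ∑ a, ρ x * dCtx γ P ν π x s a * r s a x

/-- The ambiguity set `Π₀(π)`: deterministic policies whose `ρo`-marginalized stationary
distribution matches the `ρe`-marginalized stationary distribution of `π`. -/
def AmbSet [DecidableEq A] (γ : ℝ) (P : S → A → X → S → ℝ) (ν : X → S → ℝ)
    (ρo ρe : X → ℝ) (π : S → X → A → ℝ) : Set (S → X → A → ℝ) :=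
  {π' | IsDet π' ∧ ∀ s a, dMarg γ P ν ρo π' s a = dMarg γ P ν ρe π s a}

end CMDP

section Aux

variable {S X A : Type*} [Fintype S] [Fintype X] [Fintype A]

lemma detPolicy_isPolicy [DecidableEq A] (f : S → X → A) : IsPolicy (detPolicy f) := by
  intro s x
  constructor
  · intro a; unfold detPolicy; split <;> norm_num
  · unfold detPolicy
    simp

lemma stateDist_nonneg (P : S → A → X → S → ℝ) (hP : ∀ s a x, IsProb (P s a x))
    (ν : X → S → ℝ) (hν : ∀ x, IsProb (ν x)) (π : S → X → A → ℝ) (hπ : IsPolicy π)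
    (x : X) : ∀ t s, 0 ≤ stateDist P ν π x t s
  | 0, s => (hν x).1 s
  | (t+1), s' => Finset.sum_nonneg fun s _ => Finset.sum_nonneg fun a _ =>
      mul_nonneg (mul_nonneg (stateDist_nonneg P hP ν hν π hπ x t s) ((hπ s x).1 a))
        ((hP s a x).1 s')

lemma sum_stateDist (P : S → A → X → S → ℝ) (hP : ∀ s a x, IsProb (P s a x))
    (ν : X → S → ℝ) (hν : ∀ x, IsProb (ν x)) (π : S → X → A → ℝ) (hπ : IsPolicy π)
    (x : X) : ∀ t, ∑ s, stateDist P ν π x t s = 1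
  | 0 => (hν x).2
  | (t+1) => by
    show ∑ s', ∑ s, ∑ a, stateDist P ν π x t s * π s x a * P s a x s' = 1
    calc ∑ s', ∑ s, ∑ a, stateDist P ν π x t s * π s x a * P s a x s'
        = ∑ s, ∑ s', ∑ a, stateDist P ν π x t s * π s x a * P s a x s' := Finset.sum_comm
      _ = ∑ s, ∑ a, ∑ s', stateDist P ν π x t s * π s x a * P s a x s' :=
          Finset.sum_congr rfl fun s _ => Finset.sum_comm
      _ = ∑ s, ∑ a, stateDist P ν π x t s * π s x a := by
          refine Finset.sum_congr rfl fun s _ => Finset.sum_congr rfl fun a _ => ?_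
          rw [← Finset.mul_sum, (hP s a x).2, mul_one]
      _ = ∑ s, stateDist P ν π x t s := by
          refine Finset.sum_congr rfl fun s _ => ?_
          rw [← Finset.mul_sum, (hπ s x).2, mul_one]
      _ = 1 := sum_stateDist P hP ν hν π hπ x t

lemma stateDist_le_one (P : S → A → X → S → ℝ) (hP : ∀ s a x, IsProb (P s a x))
    (ν : X → S → ℝ) (hν : ∀ x, IsProb (ν x)) (π : S → X → A → ℝ) (hπ : IsPolicy π)
    (x : X) (t : ℕ) (s : S) : stateDist P ν π x t s ≤ 1 := by
  have h := sum_stateDist P hP ν hν π hπ x t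
  calc stateDist P ν π x t s
      ≤ ∑ s', stateDist P ν π x t s' :=
        Finset.single_le_sum (fun s' _ => stateDist_nonneg P hP ν hν π hπ x t s')
          (Finset.mem_univ s)
    _ = 1 := h

lemma pi_le_one (π : S → X → A → ℝ) (hπ : IsPolicy π) (s : S) (x : X) (a : A) :
    π s x a ≤ 1 := by
  have h := (hπ s x).2
  calc π s x a ≤ ∑ a', π s x a' :=
        Finset.single_le_sum (fun a' _ => (hπ s x).1 a') (Finset.mem_univ a)
    _ = 1 := h

lemma summable_dterm (γ : ℝ) (hγ0 : 0 ≤ γ) (hγ1 : γ < 1)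
    (P : S → A → X → S → ℝ) (hP : ∀ s a x, IsProb (P s a x))
    (ν : X → S → ℝ) (hν : ∀ x, IsProb (ν x)) (π : S → X → A → ℝ) (hπ : IsPolicy π)
    (x : X) (s : S) (a : A) :
    Summable (fun t : ℕ => γ ^ t * (stateDist P ν π x t s * π s x a)) := by
  refine Summable.of_nonneg_of_le (fun t => ?_) (fun t => ?_)
    (summable_geometric_of_lt_one hγ0 hγ1)
  · exact mul_nonneg (pow_nonneg hγ0 t)
      (mul_nonneg (stateDist_nonneg P hP ν hν π hπ x t s) ((hπ s x).1 a))
  · calc γ ^ t * (stateDist P ν π x t s * π s x a)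
        ≤ γ ^ t * 1 := by
          refine mul_le_mul_of_nonneg_left ?_ (pow_nonneg hγ0 t)
          calc stateDist P ν π x t s * π s x a
              ≤ 1 * 1 := mul_le_mul (stateDist_le_one P hP ν hν π hπ x t s)
                (pi_le_one π hπ s x a) ((hπ s x).1 a) zero_le_one
            _ = 1 := one_mul 1
      _ = γ ^ t := mul_one _

lemma dCtx_nonneg (γ : ℝ) (hγ0 : 0 ≤ γ) (hγ1 : γ < 1)
    (P : S → A → X → S → ℝ) (hP : ∀ s a x, IsProb (P s a x))
    (ν : X → S → ℝ) (hν : ∀ x, IsProb (ν x)) (π : S → X → A → ℝ) (hπ : IsPolicy π)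
    (x : X) (s : S) (a : A) : 0 ≤ dCtx γ P ν π x s a := by
  unfold dCtx
  refine mul_nonneg (by linarith) (tsum_nonneg fun t => ?_)
  exact mul_nonneg (pow_nonneg hγ0 t)
    (mul_nonneg (stateDist_nonneg P hP ν hν π hπ x t s) ((hπ s x).1 a))

lemma sum_dCtx (γ : ℝ) (hγ0 : 0 ≤ γ) (hγ1 : γ < 1)
    (P : S → A → X → S → ℝ) (hP : ∀ s a x, IsProb (P s a x))
    (ν : X → S → ℝ) (hν : ∀ x, IsProb (ν x)) (π : S → X → A → ℝ) (hπ : IsPolicy π)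
    (x : X) : ∑ s, ∑ a, dCtx γ P ν π x s a = 1 := by
  have hsum : ∀ s a, Summable (fun t : ℕ => γ ^ t * (stateDist P ν π x t s * π s x a)) :=
    fun s a => summable_dterm γ hγ0 hγ1 P hP ν hν π hπ x s a
  have step1 : ∀ s : S, ∑ a, dCtx γ P ν π x s a
      = (1 - γ) * ∑' t : ℕ, ∑ a, γ ^ t * (stateDist P ν π x t s * π s x a) := by
    intro s
    unfold dCtx
    rw [← Finset.mul_sum]
    congr 1
    exact (Finset.sum_congr rfl (fun a _ => rfl)).trans
      (Summable.tsum_finsetSum (fun a _ => hsum s a)).symm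
  have hsum2 : ∀ s : S, Summable (fun t : ℕ => ∑ a, γ ^ t * (stateDist P ν π x t s * π s x a)) :=
    fun s => summable_sum (fun a _ => hsum s a)
  calc ∑ s, ∑ a, dCtx γ P ν π x s a
      = (1 - γ) * ∑ s, ∑' t : ℕ, ∑ a, γ ^ t * (stateDist P ν π x t s * π s x a) := by
        rw [Finset.mul_sum]; exact Finset.sum_congr rfl fun s _ => step1 s
    _ = (1 - γ) * ∑' t : ℕ, ∑ s, ∑ a, γ ^ t * (stateDist P ν π x t s * π s x a) := by
        rw [Summable.tsum_finsetSum (fun s _ => hsum2 s)]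
    _ = (1 - γ) * ∑' t : ℕ, γ ^ t := by
        congr 1
        refine tsum_congr fun t => ?_
        have : ∑ s, ∑ a, γ ^ t * (stateDist P ν π x t s * π s x a)
            = γ ^ t * ∑ s, ∑ a, stateDist P ν π x t s * π s x a := by
          rw [Finset.mul_sum]
          exact Finset.sum_congr rfl fun s _ => (Finset.mul_sum _ _ _).symm
        rw [this]
        have h2 : ∑ s, ∑ a, stateDist P ν π x t s * π s x a = 1 := by
          calc ∑ s, ∑ a, stateDist P ν π x t s * π s x a
              = ∑ s, stateDist P ν π x t s := by
                refine Finset.sum_congr rfl fun s _ => ?_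
                rw [← Finset.mul_sum, (hπ s x).2, mul_one]
            _ = 1 := sum_stateDist P hP ν hν π hπ x t
        rw [h2, mul_one]
    _ = (1 - γ) * (1 - γ)⁻¹ := by rw [tsum_geometric_of_lt_one hγ0 hγ1]
    _ = 1 := mul_inv_cancel₀ (by linarith)

end Aux

/-- If the reward is uniformly `ε`-close to a context-free reward `r0`,
then for any policy `π*` and any `π0 ∈ Π₀(π*)`: `v_{ρo}(π0) ≥ v_{ρe}(π*) − 2ε`. -/
theorem uniformly_bounded_reward_dependence
    {S X A : Type*} [Fintype S] [Fintype X] [Fintype A] [DecidableEq A]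
    [Nonempty S] [Nonempty X] [Nonempty A]
    (γ : ℝ) (hγ : 0 < γ ∧ γ < 1)
    (P : S → A → X → S → ℝ) (hP : ∀ s a x, IsProb (P s a x))
    (ν : X → S → ℝ) (hν : ∀ x, IsProb (ν x))
    (ρo ρe : X → ℝ) (hρo : IsProb ρo) (hρe : IsProb ρe)
    (r : S → A → X → ℝ) (hr : ∀ s a x, r s a x ∈ Set.Icc (0:ℝ) 1)
    (ε : ℝ) (hε : 0 ≤ ε)
    (r0 : S → A → ℝ) (hr0 : ∀ s a x, |r s a x - r0 s a| ≤ ε)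
    (πstar : S → X → A → ℝ) (hπstar : IsPolicy πstar)
    (π0 : S → X → A → ℝ) (hπ0 : π0 ∈ AmbSet γ P ν ρo ρe πstar) :
    val γ P ν ρo r π0 ≥ val γ P ν ρe r πstar - 2 * ε := by
  obtain ⟨hγ0, hγ1⟩ := hγ
  obtain ⟨⟨f, hf⟩, hmatch⟩ := hπ0
  have hπ0pol : IsPolicy π0 := hf ▸ detPolicy_isPolicy f
  -- key estimate for any prob. distribution ρ and policy π
  have key : ∀ (ρ : X → ℝ), IsProb ρ → ∀ (π : S → X → A → ℝ), IsPolicy π →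
      |val γ P ν ρ r π - ∑ s, ∑ a, dMarg γ P ν ρ π s a * r0 s a| ≤ ε := by
    intro ρ hρ π hπ
    have reord : ∑ s, ∑ a, dMarg γ P ν ρ π s a * r0 s a
        = ∑ x, ∑ s, ∑ a, ρ x * dCtx γ P ν π x s a * r0 s a := by
      calc ∑ s, ∑ a, dMarg γ P ν ρ π s a * r0 s a
          = ∑ s, ∑ a, ∑ x, ρ x * dCtx γ P ν π x s a * r0 s a := by
            refine Finset.sum_congr rfl fun s _ => Finset.sum_congr rfl fun a _ => ?_
            unfold dMarg; rw [Finset.sum_mul]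
        _ = ∑ s, ∑ x, ∑ a, ρ x * dCtx γ P ν π x s a * r0 s a :=
            Finset.sum_congr rfl fun s _ => Finset.sum_comm
        _ = ∑ x, ∑ s, ∑ a, ρ x * dCtx γ P ν π x s a * r0 s a := Finset.sum_comm
    rw [reord]
    unfold val
    rw [← Finset.sum_sub_distrib]
    simp only [← Finset.sum_sub_distrib]
    have hd : ∀ x s a, 0 ≤ ρ x * dCtx γ P ν π x s a := fun x s a =>
      mul_nonneg (hρ.1 x) (dCtx_nonneg γ (le_of_lt hγ0) hγ1 P hP ν hν π hπ x s a)
    calc |∑ x, ∑ s, ∑ a, (ρ x * dCtx γ P ν π x s a * r s a x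
            - ρ x * dCtx γ P ν π x s a * r0 s a)|
        ≤ ∑ x, ∑ s, ∑ a, |ρ x * dCtx γ P ν π x s a * r s a x
            - ρ x * dCtx γ P ν π x s a * r0 s a| := by
          refine (Finset.abs_sum_le_sum_abs _ _).trans ?_
          refine Finset.sum_le_sum fun x _ => ?_
          refine (Finset.abs_sum_le_sum_abs _ _).trans ?_
          exact Finset.sum_le_sum fun s _ => Finset.abs_sum_le_sum_abs _ _
      _ ≤ ∑ x, ∑ s, ∑ a, ρ x * dCtx γ P ν π x s a * ε := by
          refine Finset.sum_le_sum fun x _ => Finset.sum_le_sum fun s _ =>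
            Finset.sum_le_sum fun a _ => ?_
          rw [← mul_sub, abs_mul, abs_of_nonneg (hd x s a)]
          exact mul_le_mul_of_nonneg_left (hr0 s a x) (hd x s a)
      _ = ε := by
          have : ∑ x, ∑ s, ∑ a, ρ x * dCtx γ P ν π x s a * ε
              = (∑ x, ρ x * ∑ s, ∑ a, dCtx γ P ν π x s a) * ε := by
            rw [Finset.sum_mul]
            refine Finset.sum_congr rfl fun x _ => ?_
            rw [Finset.mul_sum, Finset.sum_mul]
            refine Finset.sum_congr rfl fun s _ => ?_
            rw [Finset.mul_sum, Finset.sum_mul]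
          rw [this]
          have hmass : ∑ x, ρ x * ∑ s, ∑ a, dCtx γ P ν π x s a = 1 := by
            calc ∑ x, ρ x * ∑ s, ∑ a, dCtx γ P ν π x s a
                = ∑ x, ρ x * 1 := Finset.sum_congr rfl fun x _ => by
                  rw [sum_dCtx γ (le_of_lt hγ0) hγ1 P hP ν hν π hπ x]
              _ = 1 := by simp [hρ.2]
          rw [hmass, one_mul]
  have h1 := key ρo hρo π0 hπ0pol
  have h2 := key ρe hρe πstar hπstar
  have hBeq : ∑ s, ∑ a, dMarg γ P ν ρo π0 s a * r0 s a
      = ∑ s, ∑ a, dMarg γ P ν ρe πstar s a * r0 s a := by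
    refine Finset.sum_congr rfl fun s _ => Finset.sum_congr rfl fun a _ => ?_
    rw [hmatch s a]
  rw [abs_le] at h1 h2
  linarith [h1.1, h1.2, h2.1, h2.2]
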